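/- arXiv:1207.5676 — 3 statements merged into one kernel-verified Lean document; each statement's English description precedes it below -/
import Mathlib

section
/- Conservation of total energy for the coupled acoustic-oscillator system: suppose (p, v, y₁,…,yₙ, z₁,…,zₙ) is a classical solution of the system ∂p/∂t = −a²ρ₀ ∂v/∂x and ∂v/∂t = −ρ₀⁻¹ ∂p/∂x on ℝ∖{s₁,…,sₙ} for each time, Mⱼ dzⱼ/dt = −Kⱼ yⱼ − S₀ (p(t, sⱼ⁺) − p(t, sⱼ⁻)), dyⱼ/dt = zⱼ(t) = v(t, sⱼ), where for each t the functions p(t,·), v(t,·), ∂p/∂t(t,·), ∂v/∂t(t,·) are square-integrable, v(t,·) is continuous, p(t,·) is absolutely continuous on each interval between consecutive points sⱼ with one-sided limits at the sⱼ, and all fields are C¹ in time with derivatives jointly controlled so that differentiation under the integral sign is justified (e.g. p, v ∈ C¹(ℝ; L²(ℝ))). Then the total energy E(t) = (S₀/(2a²ρ₀)) ∫|p(t,x)|²dx + (S₀ρ₀/2) ∫|v(t,x)|²dx + Σⱼ [ (Kⱼ/2)|yⱼ(t)|² + (Mⱼ/2)|zⱼ(t)|² ] is constant in t. -/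
/-!
Differentiating under the integral sign and using the acoustic equations, the field energy
changes at rate `-S₀ ∫ (p ∂ₓv + v ∂ₓp) = -S₀ ∫ ∂ₓ(p v)`. As `p v` and its derivative off the
walls are integrable, `∫ ∂ₓ(p v)` is the sum of the jumps of `p v` across the walls,
`∑ⱼ (p(sⱼ⁻) - p(sⱼ⁺)) v(sⱼ)`. By Newton's law the `j`-th oscillator gains energy at rate
`-S₀ zⱼ (p(sⱼ⁺) - p(sⱼ⁻))`, so with `zⱼ = v(sⱼ)` the two rates cancel.
-/

open MeasureTheory Filter Topology Set

section JumpFormula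

variable {f g : ℝ → ℝ}

theorem integral_Ioi_of_hasDerivAt_of_tendsto_nhdsGT {a fa m : ℝ}
    (hderiv : ∀ x ∈ Ioi a, HasDerivAt f (g x) x) (hg : IntegrableOn g (Ioi a))
    (ha : Tendsto f (𝓝[>] a) (𝓝 fa)) (hm : Tendsto f atTop (𝓝 m)) :
    ∫ x in Ioi a, g x = m - fa := by
  have hcont : ContinuousWithinAt (Function.update f a fa) (Ici a) a := by
    rwa [continuousWithinAt_update_same, Ici_sdiff_left]
  have hderiv' : ∀ x ∈ Ioi a, HasDerivAt (Function.update f a fa) (g x) x := fun x hx =>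
    (hderiv x hx).congr_of_eventuallyEq <| by
      filter_upwards [Ioi_mem_nhds hx] with y hy using Function.update_of_ne hy.ne' _ _
  have hm' : Tendsto (Function.update f a fa) atTop (𝓝 m) := hm.congr' <| by
    filter_upwards [Ioi_mem_atTop a] with y hy using (Function.update_of_ne hy.ne' _ _).symm
  rw [integral_Ioi_of_hasDerivAt_of_tendsto hcont hderiv' hg hm', Function.update_self]

variable {ι : Type*} {s : ι → ℝ} {Lm Lp : ι → ℝ}

theorem integral_Ioi_eq_sum_jumps_sub (hs : Function.Injective s) (T : Finset ι) {A LA : ℝ}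
    (hA : ∀ i ∈ T, A < s i) (hf : IntegrableOn f (Ioi A)) (hg : IntegrableOn g (Ioi A))
    (hderiv : ∀ x ∈ Ioi A, (∀ i ∈ T, x ≠ s i) → HasDerivAt f (g x) x)
    (hLA : Tendsto f (𝓝[>] A) (𝓝 LA))
    (hLm : ∀ i ∈ T, Tendsto f (𝓝[<] (s i)) (𝓝 (Lm i)))
    (hLp : ∀ i ∈ T, Tendsto f (𝓝[>] (s i)) (𝓝 (Lp i))) :
    ∫ x in Ioi A, g x = ∑ i ∈ T, (Lm i - Lp i) - LA := by
  classical
  induction T using Finset.induction_on_min_value s generalizing A LA with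
  | empty =>
    have hderiv₀ : ∀ x ∈ Ioi A, HasDerivAt f (g x) x := fun x hx => hderiv x hx (by simp)
    rw [integral_Ioi_of_hasDerivAt_of_tendsto_nhdsGT hderiv₀ hg hLA
      (tendsto_zero_of_hasDerivAt_of_integrableOn_Ioi hderiv₀ hg hf), Finset.sum_empty]
  | insert c T hcT hc_min ih =>
    have hc : A < s c := hA c (Finset.mem_insert_self c T)
    have hcT' : ∀ i ∈ T, s c < s i := fun i hi =>
      (hc_min i hi).lt_of_ne (hs.ne fun h => hcT (h ▸ hi))
    have hleft : ∫ x in Ioc A (s c), g x = Lm c - LA := by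
      rw [← intervalIntegral.integral_of_le hc.le]
      refine intervalIntegral.integral_eq_sub_of_hasDerivAt_of_tendsto hc
        (fun x hx => hderiv x hx.1 fun i hi => ?_) ?_ hLA (hLm c (Finset.mem_insert_self c T))
      · rcases Finset.mem_insert.1 hi with rfl | hi
        · exact hx.2.ne
        · exact (hx.2.trans (hcT' i hi)).ne
      · exact (intervalIntegrable_iff_integrableOn_Ioc_of_le hc.le).2
          (hg.mono_set Ioc_subset_Ioi_self)
    have hright : ∫ x in Ioi (s c), g x = ∑ i ∈ T, (Lm i - Lp i) - Lp c :=
      ih hcT' (hf.mono_set (Ioi_subset_Ioi hc.le)) (hg.mono_set (Ioi_subset_Ioi hc.le))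
        (fun x hx hxT => hderiv x (hc.trans hx) fun i hi => by
          rcases Finset.mem_insert.1 hi with rfl | hi
          · exact hx.ne'
          · exact hxT i hi)
        (hLp c (Finset.mem_insert_self c T))
        (fun i hi => hLm i (Finset.mem_insert_of_mem hi))
        (fun i hi => hLp i (Finset.mem_insert_of_mem hi))
    rw [← Ioc_union_Ioi_eq_Ioi hc.le, setIntegral_union (Ioc_disjoint_Ioi le_rfl) measurableSet_Ioi
      (hg.mono_set Ioc_subset_Ioi_self) (hg.mono_set (Ioi_subset_Ioi hc.le)), hleft, hright,
      Finset.sum_insert hcT]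
    ring

theorem integral_eq_sum_jumps [Fintype ι] (hs : Function.Injective s)
    (hf : Integrable f) (hg : Integrable g)
    (hderiv : ∀ x, (∀ i, x ≠ s i) → HasDerivAt f (g x) x)
    (hLm : ∀ i, Tendsto f (𝓝[<] (s i)) (𝓝 (Lm i)))
    (hLp : ∀ i, Tendsto f (𝓝[>] (s i)) (𝓝 (Lp i))) :
    ∫ x, g x = ∑ i, (Lm i - Lp i) := by
  obtain ⟨B, hB⟩ := (Set.finite_range s).bddBelow
  have hbelow : ∀ i, B - 1 < s i := fun i => by linarith [hB (mem_range_self i)]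
  have hderiv_Iic : ∀ x ∈ Iic (B - 1), HasDerivAt f (g x) x := fun x hx =>
    hderiv x fun i => (lt_of_le_of_lt hx (hbelow i)).ne
  have hleft : ∫ x in Iic (B - 1), g x = f (B - 1) := by
    rw [integral_Iic_of_hasDerivAt_of_tendsto' hderiv_Iic hg.integrableOn
      (tendsto_zero_of_hasDerivAt_of_integrableOn_Iic hderiv_Iic hg.integrableOn hf.integrableOn),
      sub_zero]
  have hright := integral_Ioi_eq_sum_jumps_sub hs Finset.univ (fun i _ => hbelow i)
    hf.integrableOn hg.integrableOn (fun x _ hx => hderiv x fun i => hx i (Finset.mem_univ i))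
    ((hderiv_Iic _ self_mem_Iic).continuousAt.tendsto.mono_left nhdsWithin_le_nhds)
    (fun i _ => hLm i) (fun i _ => hLp i)
  rw [← intervalIntegral.integral_Iic_add_Ioi hg.integrableOn hg.integrableOn, hleft, hright]
  ring

theorem integral_mul_deriv_add_eq_sum_jumps [Fintype ι] (hs : Function.Injective s)
    {u w u' w' : ℝ → ℝ} (huw : Integrable fun x => u x * w x)
    (huw' : Integrable fun x => u x * w' x + w x * u' x)
    (hu : ∀ x, (∀ i, x ≠ s i) → HasDerivAt u (u' x) x)
    (hw : ∀ x, (∀ i, x ≠ s i) → HasDerivAt w (w' x) x) (hw_cont : Continuous w)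
    (hLm : ∀ i, Tendsto u (𝓝[<] (s i)) (𝓝 (Lm i)))
    (hLp : ∀ i, Tendsto u (𝓝[>] (s i)) (𝓝 (Lp i))) :
    ∫ x, (u x * w' x + w x * u' x) = ∑ i, (Lm i - Lp i) * w (s i) := by
  have hw_at (i : ι) {l : Filter ℝ} (hl : l ≤ 𝓝 (s i)) : Tendsto w l (𝓝 (w (s i))) :=
    hw_cont.continuousAt.tendsto.mono_left hl
  simp only [sub_mul]
  exact integral_eq_sum_jumps hs huw huw'
    (fun x hx => ((hu x hx).mul (hw x hx)).congr_deriv (by ring))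
    (fun i => (hLm i).mul (hw_at i nhdsWithin_le_nhds))
    (fun i => (hLp i).mul (hw_at i nhdsWithin_le_nhds))

end JumpFormula

section EnergyDerivatives

variable {α : Type*} [MeasurableSpace α] {μ : Measure α}

theorem aestronglyMeasurable_of_hasDerivAt_ae {ν : Measure ℝ} {f f' : ℝ → ℝ}
    (h : ∀ᵐ x ∂ν, HasDerivAt f (f' x) x) : AEStronglyMeasurable f' ν :=
  (measurable_deriv f).aestronglyMeasurable.congr (h.mono fun _ hx => hx.deriv)

theorem integrable_mul_of_integrable_sq {f g : α → ℝ}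
    (hf : AEStronglyMeasurable f μ) (hg : AEStronglyMeasurable g μ)
    (hf2 : Integrable (fun x => f x ^ 2) μ) (hg2 : Integrable (fun x => g x ^ 2) μ) :
    Integrable (fun x => f x * g x) μ :=
  ((memLp_two_iff_integrable_sq hf).2 hf2).integrable_mul
    ((memLp_two_iff_integrable_sq hg).2 hg2)

theorem hasDerivAt_integral_sq {F G : ℝ → α → ℝ} {c t₀ : ℝ} {U : Set ℝ} {bound : α → ℝ}
    (hU : U ∈ 𝓝 t₀) (hF_meas : ∀ᶠ t in 𝓝 t₀, AEStronglyMeasurable (F t) μ)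
    (hF_int : Integrable (fun x => F t₀ x ^ 2) μ) (hG_meas : AEStronglyMeasurable (G t₀) μ)
    (h_bound : ∀ᵐ x ∂μ, ∀ t ∈ U, |F t x * G t x| ≤ bound x) (h_bound_int : Integrable bound μ)
    (h_diff : ∀ᵐ x ∂μ, ∀ t ∈ U, HasDerivAt (F · x) (c * G t x) t) :
    Integrable (fun x => F t₀ x * G t₀ x) μ ∧
      HasDerivAt (fun t => ∫ x, F t x ^ 2 ∂μ) (2 * c * ∫ x, F t₀ x * G t₀ x ∂μ) t₀ := by
  have hFG_meas := hF_meas.self_of_nhds.mul hG_meas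
  refine ⟨h_bound_int.mono' hFG_meas (h_bound.mono fun x hx => hx t₀ (mem_of_mem_nhds hU)), ?_⟩
  have key := hasDerivAt_integral_of_dominated_loc_of_deriv_le
    (F := fun t x => F t x ^ 2) (F' := fun t x => 2 * c * (F t x * G t x)) hU
    (hF_meas.mono fun t ht => ht.pow 2) hF_int
    (hFG_meas.const_mul (2 * c)) (h_bound.mono fun x hx t ht => ?_)
    (h_bound_int.const_mul (2 * |c|)) (h_diff.mono fun x hx t ht => ?_)
  · simpa only [integral_const_mul] using key.2
  · rw [norm_mul, norm_mul, Real.norm_eq_abs, Real.norm_eq_abs, abs_of_pos two_pos]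
    exact mul_le_mul_of_nonneg_left (hx t ht) (by positivity)
  · exact ((hx t ht).pow 2).congr_deriv (by push_cast; ring)

end EnergyDerivatives

theorem hasDerivAt_oscillator_energy {y z : ℝ → ℝ} {K M F t : ℝ} (hM : M ≠ 0)
    (hy : HasDerivAt y (z t) t) (hz : HasDerivAt z ((-K * y t - F) / M) t) :
    HasDerivAt (fun τ => K / 2 * y τ ^ 2 + M / 2 * z τ ^ 2) (-(z t * F)) t := by
  refine (((hy.pow 2).const_mul (K / 2)).add ((hz.pow 2).const_mul (M / 2))).congr_deriv ?_
  field_simp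
  push_cast
  ring

theorem energy_conservation_general
    (n : ℕ) (s : Fin n → ℝ) (hs : StrictMono s)
    (ρ₀ a S₀ : ℝ) (hρ₀ : 0 < ρ₀) (ha : 0 < a)
    (M K : Fin n → ℝ) (hM : ∀ j, 0 < M j)
    (p v px vx : ℝ → ℝ → ℝ) (y z : Fin n → ℝ → ℝ) (pplus pminus : Fin n → ℝ → ℝ)
    -- spatial derivatives off the walls
    (hpx : ∀ t x, (∀ j, x ≠ s j) → HasDerivAt (fun ξ => p t ξ) (px t x) x)
    (hvx : ∀ t x, (∀ j, x ≠ s j) → HasDerivAt (fun ξ => v t ξ) (vx t x) x)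
    -- the acoustic equations ∂p/∂t = −a²ρ₀ ∂v/∂x, ∂v/∂t = −ρ₀⁻¹ ∂p/∂x on ℝ∖S
    (hpt : ∀ t x, (∀ j, x ≠ s j) →
      HasDerivAt (fun τ => p τ x) (-(a ^ 2 * ρ₀) * vx t x) t)
    (hvt : ∀ t x, (∀ j, x ≠ s j) →
      HasDerivAt (fun τ => v τ x) (-(ρ₀⁻¹) * px t x) t)
    -- one-sided limits of the pressure at the walls
    (hplus : ∀ j t, Tendsto (fun ξ => p t ξ) (𝓝[>] (s j)) (𝓝 (pplus j t)))
    (hminus : ∀ j t, Tendsto (fun ξ => p t ξ) (𝓝[<] (s j)) (𝓝 (pminus j t)))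
    -- Newton's law for the oscillators and the kinematic conditions
    (hz : ∀ (j : Fin n) (t : ℝ), HasDerivAt (z j)
      ((-(K j) * y j t - S₀ * (pplus j t - pminus j t)) / M j) t)
    (hy : ∀ (j : Fin n) (t : ℝ), HasDerivAt (y j) (z j t) t)
    (hbc : ∀ (j : Fin n) (t : ℝ), z j t = v t (s j))
    -- regularity: v(t,·) continuous, p(t,·) absolutely continuous between the walls
    (hvcont : ∀ t, Continuous (fun ξ => v t ξ))
    -- square-integrability of the fields and of their time derivatives
    (hL2p : ∀ t, Integrable (fun x => (p t x) ^ 2))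
    (hL2v : ∀ t, Integrable (fun x => (v t x) ^ 2))
    (hmp : ∀ t, AEStronglyMeasurable (fun x => p t x) volume)
    -- local-in-time domination justifying differentiation under the integral sign
    (hdom : ∀ T > (0 : ℝ), ∃ g : ℝ → ℝ, Integrable g ∧
      ∀ t, |t| ≤ T → ∀ x, (∀ j, x ≠ s j) →
        |p t x * vx t x| ≤ g x ∧ |v t x * px t x| ≤ g x) :
    ∀ t : ℝ,
      (S₀ / (2 * a ^ 2 * ρ₀)) * (∫ x : ℝ, (p t x) ^ 2)
        + (S₀ * ρ₀ / 2) * (∫ x : ℝ, (v t x) ^ 2)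
        + ∑ j, (K j / 2 * (y j t) ^ 2 + M j / 2 * (z j t) ^ 2)
      = (S₀ / (2 * a ^ 2 * ρ₀)) * (∫ x : ℝ, (p 0 x) ^ 2)
        + (S₀ * ρ₀ / 2) * (∫ x : ℝ, (v 0 x) ^ 2)
        + ∑ j, (K j / 2 * (y j 0) ^ 2 + M j / 2 * (z j 0) ^ 2) := by
  have hwalls : ∀ᵐ x : ℝ, ∀ j, x ≠ s j := by
    filter_upwards [(Set.finite_range s).countable.ae_notMem volume] with x hx j hxj
    exact hx ⟨j, hxj.symm⟩
  have hE : ∀ t₀, HasDerivAt (fun t => (S₀ / (2 * a ^ 2 * ρ₀)) * (∫ x : ℝ, (p t x) ^ 2)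
      + (S₀ * ρ₀ / 2) * (∫ x : ℝ, (v t x) ^ 2)
      + ∑ j, (K j / 2 * (y j t) ^ 2 + M j / 2 * (z j t) ^ 2)) 0 t₀ := by
    intro t₀
    obtain ⟨g, hg, hbound⟩ := hdom (|t₀| + 1) (by positivity)
    have hU : {t : ℝ | |t| < |t₀| + 1} ∈ 𝓝 t₀ :=
      (isOpen_lt continuous_abs continuous_const).mem_nhds (lt_add_one |t₀|)
    obtain ⟨hpvx, Hp⟩ := hasDerivAt_integral_sq hU
      (Eventually.of_forall hmp) (hL2p t₀)
      (aestronglyMeasurable_of_hasDerivAt_ae (hwalls.mono (hvx t₀)))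
      (hwalls.mono fun x hx t ht => (hbound t (le_of_lt ht) x hx).1) hg
      (hwalls.mono fun x hx t _ => hpt t x hx)
    obtain ⟨hvpx, Hv⟩ := hasDerivAt_integral_sq hU
      (Eventually.of_forall fun t => (hvcont t).aestronglyMeasurable) (hL2v t₀)
      (aestronglyMeasurable_of_hasDerivAt_ae (hwalls.mono (hpx t₀)))
      (hwalls.mono fun x hx t ht => (hbound t (le_of_lt ht) x hx).2) hg
      (hwalls.mono fun x hx t _ => hvt t x hx)
    have Hosc := HasDerivAt.fun_sum fun j (_ : j ∈ Finset.univ) =>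
      hasDerivAt_oscillator_energy (hM j).ne' (hy j t₀) (hz j t₀)
    have hflux : ∫ x, (p t₀ x * vx t₀ x + v t₀ x * px t₀ x)
        = ∑ j, (pminus j t₀ - pplus j t₀) * v t₀ (s j) :=
      integral_mul_deriv_add_eq_sum_jumps hs.injective
        (integrable_mul_of_integrable_sq (hmp t₀) (hvcont t₀).aestronglyMeasurable
          (hL2p t₀) (hL2v t₀)) (hpvx.add hvpx) (hpx t₀) (hvx t₀) (hvcont t₀)
        (hminus · t₀) (hplus · t₀)
    rw [integral_add hpvx hvpx] at hflux
    refine (((Hp.const_mul _).add (Hv.const_mul _)).add Hosc).congr_deriv ?_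
    have hsum : ∑ j, -(z j t₀ * (S₀ * (pplus j t₀ - pminus j t₀)))
        = S₀ * ∑ j, (pminus j t₀ - pplus j t₀) * v t₀ (s j) := by
      rw [Finset.mul_sum]
      exact Finset.sum_congr rfl fun j _ => by rw [hbc]; ring
    rw [hsum, ← hflux]
    field_simp
    ring
  exact fun t => is_const_of_deriv_eq_zero (fun t => (hE t).differentiableAt)
    (fun t => (hE t).deriv) t 0

/-- Conservation of the total energy for the coupled
acoustic-field/oscillator system.  Here `p v : ℝ → ℝ → ℝ` are the pressure and velocity
fields (time is the first variable), `px`, `vx` are their spatial derivatives off the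
walls, `y j`, `z j` are the oscillator displacements and velocities, and
`pplus j t`, `pminus j t` the one-sided limits `p(t, sⱼ±)`.  Under the stated
regularity (classical solution, square-integrable fields, `v(t,·)` continuous,
`p(t,·)` absolutely continuous between consecutive walls with one-sided limits at the
walls, and locally-in-time dominated time-derivatives justifying differentiation under
the integral sign) the total energy
`E(t) = (S₀/(2a²ρ₀))∫p² + (S₀ρ₀/2)∫v² + Σⱼ[(Kⱼ/2)yⱼ² + (Mⱼ/2)zⱼ²]`
is constant. -/
theorem energy_conservation
    (n : ℕ) (s : Fin n → ℝ) (hs : StrictMono s)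
    (ρ₀ a S₀ : ℝ) (hρ₀ : 0 < ρ₀) (ha : 0 < a) (hS₀ : 0 < S₀)
    (M K : Fin n → ℝ) (hM : ∀ j, 0 < M j) (hK : ∀ j, 0 < K j)
    (p v px vx : ℝ → ℝ → ℝ) (y z : Fin n → ℝ → ℝ) (pplus pminus : Fin n → ℝ → ℝ)
    -- spatial derivatives off the walls
    (hpx : ∀ t x, (∀ j, x ≠ s j) → HasDerivAt (fun ξ => p t ξ) (px t x) x)
    (hvx : ∀ t x, (∀ j, x ≠ s j) → HasDerivAt (fun ξ => v t ξ) (vx t x) x)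
    -- the acoustic equations ∂p/∂t = −a²ρ₀ ∂v/∂x, ∂v/∂t = −ρ₀⁻¹ ∂p/∂x on ℝ∖S
    (hpt : ∀ t x, (∀ j, x ≠ s j) →
      HasDerivAt (fun τ => p τ x) (-(a ^ 2 * ρ₀) * vx t x) t)
    (hvt : ∀ t x, (∀ j, x ≠ s j) →
      HasDerivAt (fun τ => v τ x) (-(ρ₀⁻¹) * px t x) t)
    -- one-sided limits of the pressure at the walls
    (hplus : ∀ j t, Tendsto (fun ξ => p t ξ) (𝓝[>] (s j)) (𝓝 (pplus j t)))
    (hminus : ∀ j t, Tendsto (fun ξ => p t ξ) (𝓝[<] (s j)) (𝓝 (pminus j t)))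
    -- Newton's law for the oscillators and the kinematic conditions
    (hz : ∀ (j : Fin n) (t : ℝ), HasDerivAt (z j)
      ((-(K j) * y j t - S₀ * (pplus j t - pminus j t)) / M j) t)
    (hy : ∀ (j : Fin n) (t : ℝ), HasDerivAt (y j) (z j t) t)
    (hbc : ∀ (j : Fin n) (t : ℝ), z j t = v t (s j))
    -- regularity: v(t,·) continuous, p(t,·) absolutely continuous between the walls
    (hvcont : ∀ t, Continuous (fun ξ => v t ξ))
    (hpac : ∀ (t x₁ x₂ : ℝ), x₁ ≤ x₂ → (∀ j, s j ∉ Set.Icc x₁ x₂) →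
      p t x₂ - p t x₁ = ∫ ξ in x₁..x₂, px t ξ)
    -- square-integrability of the fields and of their time derivatives
    (hL2p : ∀ t, Integrable (fun x => (p t x) ^ 2))
    (hL2v : ∀ t, Integrable (fun x => (v t x) ^ 2))
    (hL2px : ∀ t, Integrable (fun x => (px t x) ^ 2))
    (hL2vx : ∀ t, Integrable (fun x => (vx t x) ^ 2))
    (hmp : ∀ t, AEStronglyMeasurable (fun x => p t x) volume)
    (hmv : ∀ t, AEStronglyMeasurable (fun x => v t x) volume)
    -- local-in-time domination justifying differentiation under the integral sign
    (hdom : ∀ T > (0 : ℝ), ∃ g : ℝ → ℝ, Integrable g ∧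
      ∀ t, |t| ≤ T → ∀ x, (∀ j, x ≠ s j) →
        |p t x * vx t x| ≤ g x ∧ |v t x * px t x| ≤ g x) :
    ∀ t : ℝ,
      (S₀ / (2 * a ^ 2 * ρ₀)) * (∫ x : ℝ, (p t x) ^ 2)
        + (S₀ * ρ₀ / 2) * (∫ x : ℝ, (v t x) ^ 2)
        + ∑ j, (K j / 2 * (y j t) ^ 2 + M j / 2 * (z j t) ^ 2)
      = (S₀ / (2 * a ^ 2 * ρ₀)) * (∫ x : ℝ, (p 0 x) ^ 2)
        + (S₀ * ρ₀ / 2) * (∫ x : ℝ, (v 0 x) ^ 2)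
        + ∑ j, (K j / 2 * (y j 0) ^ 2 + M j / 2 * (z j 0) ^ 2) :=
  energy_conservation_general n s hs ρ₀ a S₀ hρ₀ ha M K hM p v px vx y z pplus pminus hpx hvx hpt
    hvt hplus hminus hz hy hbc hvcont hL2p hL2v hmp hdom
end

section
/- Characterization of the domain of Â²: for Ψ = (p,v,y,z) ∈ D(Â), one has ÂΨ ∈ D(Â) if and only if v′ ∈ H¹(ℝ∖S), p_reg′ ∈ H¹(ℝ), and the continuous representative of p_reg′ satisfies p_reg′(sⱼ) = ρ₀( (Kⱼ/Mⱼ) yⱼ + (S₀/Mⱼ) σⱼ(p) ) for every j = 1,…,n. -/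
/-!
The components of `ÂΨ` are constant multiples of `v′`, `p_reg′`, `z` and of the oscillator
forces, so `ÂΨ ∈ D(Â)` restates the regularity of `v′` and `p_reg′`, the coupling condition
`v(sⱼ) = zⱼ` for `ÂΨ` becoming the condition on `p_reg′(sⱼ)`. The one analytic point is that
the pressure component `−a²ρ₀ v′` of `ÂΨ` must have one-sided limits at the `sⱼ` and be
measurable: as `‖g′‖` is locally integrable (`g′ ∈ L²`), `‖g y − g x‖ ≤ ∫ₓʸ ‖g′‖` makes `g`
Cauchy at every point approached from within an interval avoiding `S`.
-/

open MeasureTheory Filter Topology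

namespace BubbleAcoustics

/-- A candidate state of the coupled acoustic-field/oscillator system, together with
auxiliary data: `pd` is the derivative of the pressure `p` on `ℝ ∖ S` (equivalently, the
derivative of the regular part `p_reg` of `p`), `vd` is the derivative of the velocity
field `v`, and `pplus j`, `pminus j` are the one-sided limits `p(sⱼ⁺)`, `p(sⱼ⁻)`. -/
structure State (n : ℕ) where
  p : ℝ → ℂ
  v : ℝ → ℂ
  y : Fin n → ℂ
  z : Fin n → ℂ
  pd : ℝ → ℂ
  vd : ℝ → ℂ
  pplus : Fin n → ℂ
  pminus : Fin n → ℂ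

/-- The jump `σⱼ(p) = p(sⱼ⁺) − p(sⱼ⁻)`. -/
def State.sigma {n : ℕ} (Ψ : State n) (j : Fin n) : ℂ := Ψ.pplus j - Ψ.pminus j

/-- Membership in the domain `D(Â)`:
`p ∈ L²(ℝ) ∩ H¹(ℝ∖S)` (absolutely continuous on each interval avoiding the points `s j`,
with square-integrable derivative `pd`, and with one-sided limits `pplus j`, `pminus j`
at each `s j`), `v ∈ H¹(ℝ)` (absolutely continuous on `ℝ` with square-integrable
derivative `vd`), and the boundary conditions `v (s j) = z j`. -/
def InDomain {n : ℕ} (s : Fin n → ℝ) (Ψ : State n) : Prop :=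
  Integrable (fun x => ‖Ψ.p x‖ ^ 2) ∧
  Integrable (fun x => ‖Ψ.v x‖ ^ 2) ∧
  Integrable (fun x => ‖Ψ.pd x‖ ^ 2) ∧
  Integrable (fun x => ‖Ψ.vd x‖ ^ 2) ∧
  AEStronglyMeasurable Ψ.p volume ∧
  (∀ x y : ℝ, x ≤ y → (∀ j, s j ∉ Set.Icc x y) →
      Ψ.p y - Ψ.p x = ∫ t in x..y, Ψ.pd t) ∧
  (∀ j, Tendsto Ψ.p (𝓝[>] (s j)) (𝓝 (Ψ.pplus j))) ∧
  (∀ j, Tendsto Ψ.p (𝓝[<] (s j)) (𝓝 (Ψ.pminus j))) ∧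
  (∀ x y : ℝ, Ψ.v y - Ψ.v x = ∫ t in x..y, Ψ.vd t) ∧
  (∀ j, Ψ.v (s j) = Ψ.z j)

/-- First (pressure) component of `ÂΨ`, namely `−a²ρ₀ v′`. -/
def Ap {n : ℕ} (a ρ₀ : ℝ) (Ψ : State n) : ℝ → ℂ :=
  fun x => -((a ^ 2 * ρ₀ : ℝ) : ℂ) * Ψ.vd x

/-- Second (velocity) component of `ÂΨ`, namely `−ρ₀⁻¹ p_reg′`. -/
noncomputable def Av {n : ℕ} (ρ₀ : ℝ) (Ψ : State n) : ℝ → ℂ :=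
  fun x => -((ρ₀⁻¹ : ℝ) : ℂ) * Ψ.pd x

/-- Third (displacement) component of `ÂΨ`, namely `z`. -/
def Ay {n : ℕ} (Ψ : State n) : Fin n → ℂ := Ψ.z

/-- Fourth (oscillator-velocity) component of `ÂΨ`,
namely `−(Kⱼ/Mⱼ) yⱼ − (S₀/Mⱼ) σⱼ(p)`. -/
noncomputable def Az {n : ℕ} (S₀ : ℝ) (M K : Fin n → ℝ) (Ψ : State n) : Fin n → ℂ :=
  fun j => -((K j / M j : ℝ) : ℂ) * Ψ.y j - ((S₀ / M j : ℝ) : ℂ) * Ψ.sigma j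

/-- The (weighted) inner product on `H = L² ⊕ L² ⊕ ℂⁿ ⊕ ℂⁿ`:
`⟨⟨Ψ₁,Ψ₂⟩⟩ = (a²ρ₀)⁻¹⟨p₁,p₂⟩ + ρ₀⟨v₁,v₂⟩ + S₀⁻¹ Σⱼ (Kⱼ conj(y₁ⱼ) y₂ⱼ + Mⱼ conj(z₁ⱼ) z₂ⱼ)`. -/
noncomputable def ip {n : ℕ} (a ρ₀ S₀ : ℝ) (M K : Fin n → ℝ)
    (p₁ v₁ : ℝ → ℂ) (y₁ z₁ : Fin n → ℂ)
    (p₂ v₂ : ℝ → ℂ) (y₂ z₂ : Fin n → ℂ) : ℂ :=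
  (((a ^ 2 * ρ₀)⁻¹ : ℝ) : ℂ) * ∫ x : ℝ, starRingEnd ℂ (p₁ x) * p₂ x
    + ((ρ₀ : ℝ) : ℂ) * ∫ x : ℝ, starRingEnd ℂ (v₁ x) * v₂ x
    + ((S₀⁻¹ : ℝ) : ℂ) *
        ∑ j, (((K j : ℝ) : ℂ) * starRingEnd ℂ (y₁ j) * y₂ j
               + ((M j : ℝ) : ℂ) * starRingEnd ℂ (z₁ j) * z₂ j)

end BubbleAcoustics

open Set

theorem exists_tendsto_of_dist_le_dist {β α E : Type*} [PseudoMetricSpace α]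
    [PseudoMetricSpace E] [CompleteSpace E] {l : Filter β} [l.NeBot] {f : β → α} {g : β → E}
    {a : α} (hf : Tendsto f l (𝓝 a))
    (hg : ∀ᶠ p in l ×ˢ l, dist (g p.1) (g p.2) ≤ dist (f p.1) (f p.2)) :
    ∃ L, Tendsto g l (𝓝 L) := by
  refine cauchy_map_iff_exists_tendsto.1 (cauchy_map_iff.2 ⟨‹_›, ?_⟩)
  have hf' := (cauchy_map_iff.1 hf.cauchy_map).2
  rw [tendsto_uniformity_iff_dist_tendsto_zero] at hf' ⊢
  exact squeeze_zero' (Eventually.of_forall fun _ => dist_nonneg) hg hf'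

theorem intervalIntegrable_norm_of_integrable_norm_sq {E : Type*} [NormedAddCommGroup E]
    {f : ℝ → E} (hf : Integrable (fun x => ‖f x‖ ^ 2)) (a b : ℝ) :
    IntervalIntegrable (fun x => ‖f x‖) volume a b := by
  have hm : AEStronglyMeasurable (fun x => ‖f x‖) :=
    (Real.continuous_sqrt.comp_aestronglyMeasurable hf.1).congr
      (Eventually.of_forall fun x => Real.sqrt_sq (norm_nonneg (f x)))
  have hloc : LocallyIntegrable (fun x => ‖f x‖) :=
    ((memLp_two_iff_integrable_sq_norm hm).2 (by simpa using hf)).locallyIntegrable one_le_two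
  exact intervalIntegrable_iff.2 <|
    (hloc.integrableOn_isCompact isCompact_uIcc).mono_set uIoc_subset_uIcc

theorem MeasureTheory.Integrable.norm_sq_const_mul {α 𝕜 : Type*} [MeasurableSpace α]
    {μ : Measure α} [NormedDivisionRing 𝕜] {f : α → 𝕜} (hf : Integrable (fun x => ‖f x‖ ^ 2) μ)
    (c : 𝕜) :
    Integrable (fun x => ‖c * f x‖ ^ 2) μ := by
  simpa only [norm_mul, mul_pow] using hf.const_mul (‖c‖ ^ 2)

theorem sub_eq_integral_const_mul {𝕜 : Type*} [RCLike 𝕜] {g g' : ℝ → 𝕜} {x y : ℝ} (c : 𝕜)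
    (h : g y - g x = ∫ t in x..y, g' t) : c * g y - c * g x = ∫ t in x..y, c * g' t := by
  rw [intervalIntegral.integral_const_mul, ← h, mul_sub]

theorem dist_le_dist_integral_norm {E : Type*} [NormedAddCommGroup E] [NormedSpace ℝ E]
    {g g' : ℝ → E} (hg' : ∀ a b, IntervalIntegrable (fun t => ‖g' t‖) volume a b) (c : ℝ)
    {x y : ℝ} (hxy : x ≤ y) (hg : g y - g x = ∫ t in x..y, g' t) :
    dist (g x) (g y) ≤ dist (∫ t in c..x, ‖g' t‖) (∫ t in c..y, ‖g' t‖) := by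
  rw [dist_comm, dist_eq_norm, hg, dist_comm, Real.dist_eq,
    intervalIntegral.integral_interval_sub_left (hg' c y) (hg' c x)]
  exact (intervalIntegral.norm_integral_le_integral_norm hxy).trans (le_abs_self _)

theorem exists_tendsto_of_sub_eq_integral {E : Type*} [NormedAddCommGroup E] [NormedSpace ℝ E]
    [CompleteSpace E] {g g' : ℝ → E}
    (hg' : ∀ a b, IntervalIntegrable (fun t => ‖g' t‖) volume a b) {I : Set ℝ}
    (hg : ∀ x y, x ≤ y → Icc x y ⊆ I → g y - g x = ∫ t in x..y, g' t)
    {l : Filter ℝ} [l.NeBot] [TendstoIxxClass Icc l l] {c : ℝ} (hl : l ≤ 𝓝 c) (hI : I ∈ l) :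
    ∃ L, Tendsto g l (𝓝 L) := by
  have hP := ((intervalIntegral.continuous_primitive hg' c).tendsto c).mono_left hl
  refine exists_tendsto_of_dist_le_dist hP ?_
  filter_upwards [(tendsto_fst.Icc tendsto_snd).eventually (eventually_smallSets_subset.2 hI),
    (tendsto_snd.Icc tendsto_fst).eventually (eventually_smallSets_subset.2 hI)]
    with ⟨x, y⟩ hxy hyx
  rcases le_total x y with hle | hle
  · exact dist_le_dist_integral_norm hg' c hle (hg x y hle hxy)
  · rw [dist_comm, dist_comm (∫ t in c..x, _)]
    exact dist_le_dist_integral_norm hg' c hle (hg y x hle hyx)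

theorem continuousAt_of_sub_eq_integral {E : Type*} [NormedAddCommGroup E] [NormedSpace ℝ E]
    [CompleteSpace E] {g g' : ℝ → E}
    (hg' : ∀ a b, IntervalIntegrable (fun t => ‖g' t‖) volume a b) {I : Set ℝ}
    (hg : ∀ x y, x ≤ y → Icc x y ⊆ I → g y - g x = ∫ t in x..y, g' t)
    {c : ℝ} (hI : I ∈ 𝓝 c) : ContinuousAt g c := by
  obtain ⟨L, hL⟩ := exists_tendsto_of_sub_eq_integral hg' hg le_rfl hI
  rwa [tendsto_nhds_unique (hL.mono_left (pure_le_nhds c)) (tendsto_pure_nhds g c)] at hL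

theorem aestronglyMeasurable_of_continuousAt_of_countable {E : Type*} [TopologicalSpace E]
    [TopologicalSpace.PseudoMetrizableSpace E] {f : ℝ → E} {F : Set ℝ} (hF : F.Countable)
    (hf : ∀ x ∉ F, ContinuousAt f x) : AEStronglyMeasurable f := by
  have h := ContinuousOn.aestronglyMeasurable (μ := volume)
    (fun x hx => (hf x hx).continuousWithinAt) hF.measurableSet.compl
  rwa [Measure.restrict_eq_self_of_ae_mem (compl_mem_ae_iff.2 (hF.measure_zero _))] at h

theorem Set.Finite.compl_mem_nhdsNE {X : Type*} [TopologicalSpace X] [T1Space X] {F : Set X}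
    (hF : F.Finite) (x : X) : Fᶜ ∈ 𝓝[≠] x := by
  have := hF.to_subtype
  simpa [compl_eq_univ_sdiff] using nhdsNE_of_nhdsNE_sdiff_finite (x := x) univ_mem this

namespace BubbleAcoustics

section OffPoints

variable {ι E : Type*} [NormedAddCommGroup E] [NormedSpace ℝ E] {s : ι → ℝ} {g g' : ℝ → E}

theorem sub_eq_integral_of_subset_compl_range
    (hg : ∀ x y : ℝ, x ≤ y → (∀ j, s j ∉ Icc x y) → g y - g x = ∫ t in x..y, g' t) :
    ∀ x y, x ≤ y → Icc x y ⊆ (range s)ᶜ → g y - g x = ∫ t in x..y, g' t :=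
  fun x y hxy hI => hg x y hxy fun j hj => hI hj ⟨j, rfl⟩

variable [Finite ι] [CompleteSpace E]

theorem exists_tendsto_nhdsGT_of_sub_eq_integral (hg' : Integrable (fun x => ‖g' x‖ ^ 2))
    (hg : ∀ x y : ℝ, x ≤ y → (∀ j, s j ∉ Icc x y) → g y - g x = ∫ t in x..y, g' t) (c : ℝ) :
    ∃ L, Tendsto g (𝓝[>] c) (𝓝 L) :=
  exists_tendsto_of_sub_eq_integral (intervalIntegrable_norm_of_integrable_norm_sq hg')
    (sub_eq_integral_of_subset_compl_range hg) nhdsWithin_le_nhds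
    (nhdsGT_le_nhdsNE c ((finite_range s).compl_mem_nhdsNE c))

theorem exists_tendsto_nhdsLT_of_sub_eq_integral (hg' : Integrable (fun x => ‖g' x‖ ^ 2))
    (hg : ∀ x y : ℝ, x ≤ y → (∀ j, s j ∉ Icc x y) → g y - g x = ∫ t in x..y, g' t) (c : ℝ) :
    ∃ L, Tendsto g (𝓝[<] c) (𝓝 L) :=
  exists_tendsto_of_sub_eq_integral (intervalIntegrable_norm_of_integrable_norm_sq hg')
    (sub_eq_integral_of_subset_compl_range hg) nhdsWithin_le_nhds
    (nhdsLT_le_nhdsNE c ((finite_range s).compl_mem_nhdsNE c))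

theorem aestronglyMeasurable_of_sub_eq_integral (hg' : Integrable (fun x => ‖g' x‖ ^ 2))
    (hg : ∀ x y : ℝ, x ≤ y → (∀ j, s j ∉ Icc x y) → g y - g x = ∫ t in x..y, g' t) :
    AEStronglyMeasurable g :=
  aestronglyMeasurable_of_continuousAt_of_countable (countable_range s) fun _ hx =>
    continuousAt_of_sub_eq_integral (intervalIntegrable_norm_of_integrable_norm_sq hg')
      (sub_eq_integral_of_subset_compl_range hg)
      ((finite_range s).isClosed.isOpen_compl.mem_nhds hx)

end OffPoints

section Image

variable {n : ℕ} {s : Fin n → ℝ} {ρ₀ a S₀ : ℝ} {M K : Fin n → ℝ} {Ψ Φ : State n}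

theorem exists_repr_vd_of_image_mem_domain (hc : a ^ 2 * ρ₀ ≠ 0) (hΦ : InDomain s Φ)
    (hp : Φ.p =ᵐ[volume] Ap a ρ₀ Ψ) :
    ∃ g g' : ℝ → ℂ, g =ᵐ[volume] Ψ.vd ∧ Integrable (fun x => ‖g' x‖ ^ 2) ∧
      ∀ x y : ℝ, x ≤ y → (∀ j, s j ∉ Icc x y) → g y - g x = ∫ t in x..y, g' t := by
  obtain ⟨-, -, hpd, -, -, hpftc, -⟩ := hΦ
  set c : ℂ := -((a ^ 2 * ρ₀ : ℝ) : ℂ)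
  have hc' : c ≠ 0 := neg_ne_zero.2 (Complex.ofReal_ne_zero.2 hc)
  refine ⟨fun x => c⁻¹ * Φ.p x, fun x => c⁻¹ * Φ.pd x, ?_, hpd.norm_sq_const_mul _,
    fun x y hxy hS => sub_eq_integral_const_mul _ (hpftc x y hxy hS)⟩
  filter_upwards [hp] with x hx
  rw [hx, Ap, inv_mul_cancel_left₀ hc']

theorem exists_repr_pd_of_image_mem_domain (hρ₀ : ρ₀ ≠ 0) (hΦ : InDomain s Φ)
    (hv : Φ.v =ᵐ[volume] Av ρ₀ Ψ) (hz : Φ.z = Az S₀ M K Ψ) :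
    ∃ h h' : ℝ → ℂ, h =ᵐ[volume] Ψ.pd ∧ Integrable (fun x => ‖h' x‖ ^ 2) ∧
      (∀ x y : ℝ, h y - h x = ∫ t in x..y, h' t) ∧
      ∀ j, h (s j) = ((ρ₀ : ℝ) : ℂ) *
        (((K j / M j : ℝ) : ℂ) * Ψ.y j + ((S₀ / M j : ℝ) : ℂ) * Ψ.sigma j) := by
  obtain ⟨-, -, -, hvd, -, -, -, -, hvftc, hvz⟩ := hΦ
  set c : ℂ := -((ρ₀⁻¹ : ℝ) : ℂ)
  have hc' : c ≠ 0 := neg_ne_zero.2 (Complex.ofReal_ne_zero.2 (inv_ne_zero hρ₀))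
  refine ⟨fun x => c⁻¹ * Φ.v x, fun x => c⁻¹ * Φ.vd x, ?_, hvd.norm_sq_const_mul _,
    fun x y => sub_eq_integral_const_mul _ (hvftc x y), fun j => ?_⟩
  · filter_upwards [hv] with x hx
    rw [hx, Av, inv_mul_cancel_left₀ hc']
  · dsimp only
    rw [hvz, hz, Az]
    simp only [c, Complex.ofReal_inv, inv_neg, inv_inv]
    ring

theorem image_mem_domain_of_repr (hρ₀ : ρ₀ ≠ 0) (hpd : Integrable (fun x => ‖Ψ.pd x‖ ^ 2))
    (hvd : Integrable (fun x => ‖Ψ.vd x‖ ^ 2)) {g g' h h' : ℝ → ℂ} (hg : g =ᵐ[volume] Ψ.vd)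
    (hg' : Integrable (fun x => ‖g' x‖ ^ 2))
    (hgg' : ∀ x y : ℝ, x ≤ y → (∀ j, s j ∉ Icc x y) → g y - g x = ∫ t in x..y, g' t)
    (hh : h =ᵐ[volume] Ψ.pd) (hh' : Integrable (fun x => ‖h' x‖ ^ 2))
    (hhh' : ∀ x y : ℝ, h y - h x = ∫ t in x..y, h' t)
    (hbc : ∀ j, h (s j) = ((ρ₀ : ℝ) : ℂ) *
        (((K j / M j : ℝ) : ℂ) * Ψ.y j + ((S₀ / M j : ℝ) : ℂ) * Ψ.sigma j)) :
    ∃ Φ : State n, InDomain s Φ ∧ Φ.p =ᵐ[volume] Ap a ρ₀ Ψ ∧ Φ.v =ᵐ[volume] Av ρ₀ Ψ ∧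
      Φ.y = Ay Ψ ∧ Φ.z = Az S₀ M K Ψ := by
  choose Lp hLp using fun j => exists_tendsto_nhdsGT_of_sub_eq_integral hg' hgg' (s j)
  choose Lm hLm using fun j => exists_tendsto_nhdsLT_of_sub_eq_integral hg' hgg' (s j)
  set cp : ℂ := -((a ^ 2 * ρ₀ : ℝ) : ℂ)
  set cv : ℂ := -((ρ₀⁻¹ : ℝ) : ℂ)
  refine ⟨⟨fun x => cp * g x, fun x => cv * h x, Ψ.z, Az S₀ M K Ψ, fun x => cp * g' x,
      fun x => cv * h' x, fun j => cp * Lp j, fun j => cp * Lm j⟩,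
    ⟨(hvd.norm_sq_const_mul cp).congr (hg.fun_comp fun z => ‖cp * z‖ ^ 2).symm,
      (hpd.norm_sq_const_mul cv).congr (hh.fun_comp fun z => ‖cv * z‖ ^ 2).symm,
      hg'.norm_sq_const_mul cp, hh'.norm_sq_const_mul cv,
      (aestronglyMeasurable_of_sub_eq_integral hg' hgg').const_mul cp,
      fun x y hxy hS => sub_eq_integral_const_mul cp (hgg' x y hxy hS),
      fun j => (hLp j).const_mul cp, fun j => (hLm j).const_mul cp,
      fun x y => sub_eq_integral_const_mul cv (hhh' x y), fun j => ?_⟩,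
    hg.fun_comp (cp * ·), hh.fun_comp (cv * ·), rfl, rfl⟩
  dsimp only
  have hcv : cv * (ρ₀ : ℂ) = -1 := by
    simp [cv, Complex.ofReal_inv, inv_mul_cancel₀ (Complex.ofReal_ne_zero.2 hρ₀)]
  rw [hbc j, Az, ← mul_assoc, hcv]
  ring

end Image

theorem mem_domain_A_sq_iff_general
    (n : ℕ) (s : Fin n → ℝ)
    (ρ₀ a S₀ : ℝ) (hρ₀ : 0 < ρ₀) (ha : 0 < a)
    (M K : Fin n → ℝ)
    (Ψ : State n) (hΨ : InDomain s Ψ) :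
    (∃ Φ : State n, InDomain s Φ ∧
        Φ.p =ᵐ[volume] Ap a ρ₀ Ψ ∧ Φ.v =ᵐ[volume] Av ρ₀ Ψ ∧
        Φ.y = Ay Ψ ∧ Φ.z = Az S₀ M K Ψ)
    ↔
    -- `v′ ∈ H¹(ℝ∖S)`: a representative of `vd` is absolutely continuous on each
    -- interval avoiding `S`, with square-integrable derivative
    ((∃ g g' : ℝ → ℂ, g =ᵐ[volume] Ψ.vd ∧
        Integrable (fun x => ‖g' x‖ ^ 2) ∧
        (∀ x y : ℝ, x ≤ y → (∀ j, s j ∉ Set.Icc x y) →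
          g y - g x = ∫ t in x..y, g' t))
      ∧
      -- `p_reg′ ∈ H¹(ℝ)` and its continuous representative satisfies the boundary
      -- conditions `p_reg′(sⱼ) = ρ₀((Kⱼ/Mⱼ) yⱼ + (S₀/Mⱼ) σⱼ(p))`
      (∃ h h' : ℝ → ℂ, h =ᵐ[volume] Ψ.pd ∧
        Integrable (fun x => ‖h' x‖ ^ 2) ∧
        (∀ x y : ℝ, h y - h x = ∫ t in x..y, h' t) ∧
        (∀ j, h (s j) = ((ρ₀ : ℝ) : ℂ) *
          (((K j / M j : ℝ) : ℂ) * Ψ.y j + ((S₀ / M j : ℝ) : ℂ) * Ψ.sigma j)))) := by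
  obtain ⟨-, -, hpd, hvd, -⟩ := hΨ
  constructor
  · rintro ⟨Φ, hΦ, hp, hv, -, hz⟩
    exact ⟨exists_repr_vd_of_image_mem_domain (mul_pos (pow_pos ha 2) hρ₀).ne' hΦ hp,
      exists_repr_pd_of_image_mem_domain hρ₀.ne' hΦ hv hz⟩
  · rintro ⟨⟨g, g', hg, hg', hgg'⟩, h, h', hh, hh', hhh', hbc⟩
    exact image_mem_domain_of_repr hρ₀.ne' hpd hvd hg hg' hgg' hh hh' hhh' hbc

/-- Characterization of the domain of `Â²`: for `Ψ = (p,v,y,z) ∈ D(Â)`,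
the image `ÂΨ` belongs to `D(Â)` if and only if `v′ ∈ H¹(ℝ∖S)`, `p_reg′ ∈ H¹(ℝ)`, and
the continuous representative of `p_reg′` satisfies
`p_reg′(sⱼ) = ρ₀((Kⱼ/Mⱼ) yⱼ + (S₀/Mⱼ) σⱼ(p))` for every `j`. -/
theorem mem_domain_A_sq_iff
    (n : ℕ) (s : Fin n → ℝ) (hs : StrictMono s)
    (ρ₀ a S₀ : ℝ) (hρ₀ : 0 < ρ₀) (ha : 0 < a) (hS₀ : 0 < S₀)
    (M K : Fin n → ℝ) (hM : ∀ j, 0 < M j) (hK : ∀ j, 0 < K j)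
    (Ψ : State n) (hΨ : InDomain s Ψ) :
    (∃ Φ : State n, InDomain s Φ ∧
        Φ.p =ᵐ[volume] Ap a ρ₀ Ψ ∧ Φ.v =ᵐ[volume] Av ρ₀ Ψ ∧
        Φ.y = Ay Ψ ∧ Φ.z = Az S₀ M K Ψ)
    ↔
    -- `v′ ∈ H¹(ℝ∖S)`: a representative of `vd` is absolutely continuous on each
    -- interval avoiding `S`, with square-integrable derivative
    ((∃ g g' : ℝ → ℂ, g =ᵐ[volume] Ψ.vd ∧
        Integrable (fun x => ‖g' x‖ ^ 2) ∧
        (∀ x y : ℝ, x ≤ y → (∀ j, s j ∉ Set.Icc x y) →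
          g y - g x = ∫ t in x..y, g' t))
      ∧
      -- `p_reg′ ∈ H¹(ℝ)` and its continuous representative satisfies the boundary
      -- conditions `p_reg′(sⱼ) = ρ₀((Kⱼ/Mⱼ) yⱼ + (S₀/Mⱼ) σⱼ(p))`
      (∃ h h' : ℝ → ℂ, h =ᵐ[volume] Ψ.pd ∧
        Integrable (fun x => ‖h' x‖ ^ 2) ∧
        (∀ x y : ℝ, h y - h x = ∫ t in x..y, h' t) ∧
        (∀ j, h (s j) = ((ρ₀ : ℝ) : ℂ) *
          (((K j / M j : ℝ) : ℂ) * Ψ.y j + ((S₀ / M j : ℝ) : ℂ) * Ψ.sigma j)))) :=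
  mem_domain_A_sq_iff_general n s ρ₀ a S₀ hρ₀ ha M K Ψ hΨ

end BubbleAcoustics
end

section
/- Weak formulation of the n-oscillator system: fix n, points s₁ < … < sₙ, positive constants a, ρ₀, S₀, Mⱼ, Kⱼ. Suppose v : [0,∞) × ℝ → ℝ and zⱼ : [0,∞) → ℝ (j = 1,…,n) satisfy: v is C² in t with values in L²(ℝ), C¹ in t with values in H¹(ℝ), and for each t, v(t,·) restricted to each interval between consecutive sⱼ is H² there, with ζⱼ(t) := ∂v/∂x(t, sⱼ⁺) − ∂v/∂x(t, sⱼ⁻); the equations ∂²v/∂t² = a² ∂/∂x (∂v/∂x)_reg (where (∂v/∂x)_reg(t,x) = ∂v/∂x(t,x) − ½ Σⱼ ζⱼ(t) sgn(x − sⱼ)), Mⱼ zⱼ″ + Kⱼ zⱼ = a²ρ₀S₀ ζⱼ, v(t, sⱼ) = zⱼ(t) hold, together with zⱼ′(0) = 0 for all j. Then for every continuously differentiable, compactly supported g : ℝ × ℝ → ℝ: −∫₀^∞ ⟨∂v/∂t(t,·), ∂g/∂t(t,·)⟩ dt − ⟨∂v/∂t(0,·), g(0,·)⟩ = −a² ∫₀^∞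 ⟨∂v/∂x(t,·), ∂g/∂x(t,·)⟩ dt + (ρ₀S₀)⁻¹ ∫₀^∞ Σⱼ Mⱼ zⱼ′(t) ∂g/∂t(t, sⱼ) dt − (ρ₀S₀)⁻¹ ∫₀^∞ Σⱼ Kⱼ zⱼ(t) g(t, sⱼ) dt. -/
/-!
Test the field equation against `g` and integrate over `t > 0`. Integrating by parts in `t`
turns `∫∫ v_tt g` into the left-hand side: the boundary term at `t = 0` survives and the one at
infinity vanishes. In `x`, the regular part `(∂v/∂x)_reg` is a primitive of `D2`, so integrating
by parts against `g(t, ·)` gives `-∫ (∂v/∂x)_reg ∂g/∂x`, in which each sign term of the regular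
part produces the point value `ζⱼ(t) g(t, sⱼ)`. These point values are traded for the oscillator
terms by integrating `d/dt Σⱼ Mⱼ zⱼ'(t) g(t, sⱼ)` over `t > 0`, which gives zero because
`zⱼ'(0) = 0`. Fubini applies because the `x`-slices of the fields are uniformly bounded in `L²`
and `g` has compact support.
-/

open MeasureTheory Filter Topology Set

section Slices

variable {X Y : Type*} [TopologicalSpace X] [TopologicalSpace Y] {g : X → Y → ℝ}

theorem HasCompactSupport.left_slice [R1Space X]
    (hg : HasCompactSupport fun q : X × Y => g q.1 q.2) (y : Y) : HasCompactSupport (g · y) :=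
  .intro (hg.isCompact.image continuous_fst) fun t ht =>
    image_eq_zero_of_notMem_tsupport (f := fun q : X × Y => g q.1 q.2) fun h =>
      ht ⟨(t, y), h, rfl⟩

theorem HasCompactSupport.right_slice [R1Space Y]
    (hg : HasCompactSupport fun q : X × Y => g q.1 q.2) (x : X) : HasCompactSupport (g x ·) :=
  .intro (hg.isCompact.image continuous_snd) fun y hy =>
    image_eq_zero_of_notMem_tsupport (f := fun q : X × Y => g q.1 q.2) fun h =>
      hy ⟨(x, y), h, rfl⟩

end Slices

section PartialDerivatives

variable {g : ℝ → ℝ → ℝ}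

theorem ContDiff.left_slice {n : WithTop ℕ∞} (hg : ContDiff ℝ n fun q : ℝ × ℝ => g q.1 q.2)
    (x : ℝ) : ContDiff ℝ n (g · x) :=
  hg.comp (contDiff_id.prodMk contDiff_const)

theorem ContDiff.right_slice {n : WithTop ℕ∞} (hg : ContDiff ℝ n fun q : ℝ × ℝ => g q.1 q.2)
    (t : ℝ) : ContDiff ℝ n (g t ·) :=
  hg.comp (contDiff_const.prodMk contDiff_id)

theorem deriv_left_slice_eq_fderiv (hg : Differentiable ℝ fun q : ℝ × ℝ => g q.1 q.2)
    (t x : ℝ) : deriv (g · x) t = fderiv ℝ (fun q : ℝ × ℝ => g q.1 q.2) (t, x) (1, 0) := by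
  exact ((hg (t, x)).hasFDerivAt.comp_hasDerivAt t
    ((hasDerivAt_id t).prodMk (hasDerivAt_const t x))).deriv

theorem deriv_right_slice_eq_fderiv (hg : Differentiable ℝ fun q : ℝ × ℝ => g q.1 q.2)
    (t x : ℝ) : deriv (g t ·) x = fderiv ℝ (fun q : ℝ × ℝ => g q.1 q.2) (t, x) (0, 1) := by
  exact ((hg (t, x)).hasFDerivAt.comp_hasDerivAt x
    ((hasDerivAt_const x t).prodMk (hasDerivAt_id x))).deriv

end PartialDerivatives

theorem integrable_mul_of_sq_integral_le {α β : Type*} [MeasurableSpace α] [MeasurableSpace β]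
    {μ : Measure α} {ν : Measure β} [SFinite μ] [SFinite ν] {f : α → β → ℝ} {h : α × β → ℝ}
    {c : ℝ} {s : Set α}
    (hf : AEStronglyMeasurable (fun q : α × β => f q.1 q.2) (μ.prod ν))
    (hf_sq : ∀ a, Integrable (fun b => f a b ^ 2) ν) (hc : ∀ a, ∫ b, f a b ^ 2 ∂ν ≤ c)
    (hh : MemLp h 2 (μ.prod ν)) (hs : μ s ≠ ⊤) (hhs : ∀ q : α × β, q.1 ∉ s → h q = 0) :
    Integrable (fun q : α × β => f q.1 q.2 * h q) (μ.prod ν) := by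
  have : IsFiniteMeasure (μ.restrict s) := isFiniteMeasure_restrict.mpr hs
  have hrestrict : (μ.restrict s).prod ν = (μ.prod ν).restrict (s ×ˢ univ) := by
    rw [← Measure.prod_restrict, Measure.restrict_univ]
  have hf_sq_on : Integrable (fun q : α × β => f q.1 q.2 ^ 2) ((μ.restrict s).prod ν) := by
    have hm : AEStronglyMeasurable (fun q : α × β => f q.1 q.2 ^ 2) ((μ.restrict s).prod ν) :=
      (hf.pow 2).mono_measure (hrestrict ▸ Measure.restrict_le_self)
    refine (integrable_prod_iff hm).2 ⟨ae_of_all _ hf_sq, ?_⟩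
    refine Integrable.of_bound hm.norm.integral_prod_right' c (ae_of_all _ fun a => ?_)
    have hnn : 0 ≤ ∫ b, f a b ^ 2 ∂ν := integral_nonneg fun b => sq_nonneg (f a b)
    simpa [abs_of_nonneg hnn] using hc a
  have hf_L2 : MemLp (fun q : α × β => f q.1 q.2) 2 ((μ.prod ν).restrict (s ×ˢ univ)) := by
    rw [← hrestrict]
    exact (memLp_two_iff_integrable_sq
      (hf.mono_measure (hrestrict ▸ Measure.restrict_le_self))).2 hf_sq_on
  refine IntegrableOn.integrable_of_forall_notMem_eq_zero (s := s ×ˢ univ)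
    (hf_L2.integrable_mul (hh.restrict _)) fun q hq => ?_
  simp [hhs q fun h => hq ⟨h, trivial⟩]

section SquareIntegrableSlices

variable {μ ν : Measure ℝ} [IsLocallyFiniteMeasure μ] [IsLocallyFiniteMeasure ν] [SFinite μ]
  [SFinite ν] {f g : ℝ → ℝ → ℝ} {c : ℝ}

theorem integrable_mul_of_sq_integral_le_of_hasCompactSupport {h : ℝ × ℝ → ℝ}
    (hf : AEStronglyMeasurable (fun q : ℝ × ℝ => f q.1 q.2) (μ.prod ν))
    (hf_sq : ∀ t, Integrable (fun x => f t x ^ 2) ν) (hc : ∀ t, ∫ x, f t x ^ 2 ∂ν ≤ c)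
    (hh : Continuous h) (hh_supp : HasCompactSupport h) :
    Integrable (fun q : ℝ × ℝ => f q.1 q.2 * h q) (μ.prod ν) :=
  integrable_mul_of_sq_integral_le hf hf_sq hc (hh.memLp_of_hasCompactSupport hh_supp)
    (hh_supp.isCompact.image continuous_fst).measure_lt_top.ne
    fun q hq => image_eq_zero_of_notMem_tsupport fun h => hq ⟨q, h, rfl⟩

theorem integrable_mul_deriv_left_slice
    (hf : AEStronglyMeasurable (fun q : ℝ × ℝ => f q.1 q.2) (μ.prod ν))
    (hf_sq : ∀ t, Integrable (fun x => f t x ^ 2) ν) (hc : ∀ t, ∫ x, f t x ^ 2 ∂ν ≤ c)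
    (hg : ContDiff ℝ 1 fun q : ℝ × ℝ => g q.1 q.2)
    (hg_supp : HasCompactSupport fun q : ℝ × ℝ => g q.1 q.2) :
    Integrable (fun q : ℝ × ℝ => f q.1 q.2 * deriv (g · q.2) q.1) (μ.prod ν) := by
  simp only [deriv_left_slice_eq_fderiv (hg.differentiable one_ne_zero)]
  exact integrable_mul_of_sq_integral_le_of_hasCompactSupport hf hf_sq hc
    ((hg.continuous_fderiv one_ne_zero).clm_apply continuous_const) (hg_supp.fderiv_apply ℝ _)

theorem integrable_mul_deriv_right_slice
    (hf : AEStronglyMeasurable (fun q : ℝ × ℝ => f q.1 q.2) (μ.prod ν))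
    (hf_sq : ∀ t, Integrable (fun x => f t x ^ 2) ν) (hc : ∀ t, ∫ x, f t x ^ 2 ∂ν ≤ c)
    (hg : ContDiff ℝ 1 fun q : ℝ × ℝ => g q.1 q.2)
    (hg_supp : HasCompactSupport fun q : ℝ × ℝ => g q.1 q.2) :
    Integrable (fun q : ℝ × ℝ => f q.1 q.2 * deriv (g q.1 ·) q.2) (μ.prod ν) := by
  simp only [deriv_right_slice_eq_fderiv (hg.differentiable one_ne_zero)]
  exact integrable_mul_of_sq_integral_le_of_hasCompactSupport hf hf_sq hc
    ((hg.continuous_fderiv one_ne_zero).clm_apply continuous_const) (hg_supp.fderiv_apply ℝ _)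

end SquareIntegrableSlices

theorem HasCompactSupport.eventually_eq_zero_atTop {f : ℝ → ℝ} (hf : HasCompactSupport f) :
    ∀ᶠ t in atTop, f t = 0 :=
  Eventually.mono (atTop_le_cocompact hf.isCompact.compl_mem_cocompact) fun _ ht =>
    image_eq_zero_of_notMem_tsupport ht

theorem integral_Ioi_of_hasDerivAt_of_eventually_eq_zero {F F' : ℝ → ℝ} {a : ℝ}
    (hF : ∀ t, HasDerivAt F (F' t) t) (hF_top : ∀ᶠ t in atTop, F t = 0)
    (hF' : IntegrableOn F' (Ioi a)) :
    ∫ t in Ioi a, F' t = -F a := by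
  have hlim : Tendsto F atTop (𝓝 0) := tendsto_const_nhds.congr' (hF_top.mono fun _ h => h.symm)
  rw [integral_Ioi_of_hasDerivAt_of_tendsto (hF a).continuousAt.continuousWithinAt
    (fun t _ => hF t) hF' hlim, zero_sub]

theorem integral_Ioi_integral_deriv_mul_add_mul_deriv {X : Type*} [MeasurableSpace X]
    {ν : Measure X} [SFinite ν] {u u' φ : ℝ → X → ℝ}
    (hu : ∀ t x, HasDerivAt (u · x) (u' t x) t) (hφ : ∀ x, Differentiable ℝ (φ · x))
    (hφ_top : ∀ x, ∀ᶠ t in atTop, φ t x = 0)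
    (h₁ : Integrable (fun q : ℝ × X => u' q.1 q.2 * φ q.1 q.2)
      ((volume.restrict (Ioi 0)).prod ν))
    (h₂ : Integrable (fun q : ℝ × X => u q.1 q.2 * deriv (φ · q.2) q.1)
      ((volume.restrict (Ioi 0)).prod ν)) :
    (∫ t in Ioi 0, ∫ x, u' t x * φ t x ∂ν) + ∫ t in Ioi 0, ∫ x, u t x * deriv (φ · x) t ∂ν
      = -∫ x, u 0 x * φ 0 x ∂ν := by
  have h := h₁.add h₂
  calc (∫ t in Ioi 0, ∫ x, u' t x * φ t x ∂ν) + ∫ t in Ioi 0, ∫ x, u t x * deriv (φ · x) t ∂ν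
      = ∫ t in Ioi 0, ∫ x, (u' t x * φ t x + u t x * deriv (φ · x) t) ∂ν := by
        rw [← integral_add h₁.integral_prod_left h₂.integral_prod_left]
        refine integral_congr_ae ?_
        filter_upwards [h₁.prod_right_ae, h₂.prod_right_ae] with t ht₁ ht₂
        exact (integral_add ht₁ ht₂).symm
    _ = ∫ x, (∫ t in Ioi 0, (u' t x * φ t x + u t x * deriv (φ · x) t)) ∂ν :=
        integral_integral_swap h
    _ = ∫ x, -(u 0 x * φ 0 x) ∂ν := by
        refine integral_congr_ae ?_
        filter_upwards [h.swap.prod_right_ae] with x hx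
        exact integral_Ioi_of_hasDerivAt_of_eventually_eq_zero
          (fun t => (hu t x).mul (hφ x t).hasDerivAt)
          ((hφ_top x).mono fun t ht => by simp [ht]) hx
    _ = -∫ x, u 0 x * φ 0 x ∂ν := integral_neg _

theorem integrableOn_sign_sub_mul_Iio {G : ℝ → ℝ} (hG : Integrable G) (c : ℝ) :
    IntegrableOn (fun x => Real.sign (x - c) * G x) (Iio c) :=
  hG.neg.integrableOn.congr_fun (fun x hx => by
    simp [Real.sign_of_neg (sub_neg.2 (mem_Iio.1 hx))]) measurableSet_Iio

theorem integrableOn_sign_sub_mul_Ioi {G : ℝ → ℝ} (hG : Integrable G) (c : ℝ) :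
    IntegrableOn (fun x => Real.sign (x - c) * G x) (Ioi c) :=
  hG.integrableOn.congr_fun (fun x hx => by
    simp [Real.sign_of_pos (sub_pos.2 (mem_Ioi.1 hx))]) measurableSet_Ioi

theorem integrable_sign_sub_mul {G : ℝ → ℝ} (hG : Integrable G) (c : ℝ) :
    Integrable fun x => Real.sign (x - c) * G x := by
  rw [← integrableOn_univ, ← Iic_union_Ioi (a := c)]
  exact ((integrableOn_Iic_iff_integrableOn_Iio).2 (integrableOn_sign_sub_mul_Iio hG c)).union
    (integrableOn_sign_sub_mul_Ioi hG c)

theorem integral_sign_sub_mul_deriv {G : ℝ → ℝ} (hG : ContDiff ℝ 1 G) (hGc : HasCompactSupport G)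
    (c : ℝ) : ∫ x, Real.sign (x - c) * deriv G x = -2 * G c := by
  have hG' : Integrable (deriv G) :=
    (hG.continuous_deriv le_rfl).integrable_of_hasCompactSupport hGc.deriv
  have hIio : ∫ x in Iio c, Real.sign (x - c) * deriv G x = -G c := by
    rw [setIntegral_congr_fun measurableSet_Iio (g := fun x => -deriv G x) fun x hx => by
        simp [Real.sign_of_neg (sub_neg.2 (mem_Iio.1 hx))],
      integral_neg, ← integral_Iic_eq_integral_Iio, hGc.integral_Iic_deriv_eq hG]
  have hIoi : ∫ x in Ioi c, Real.sign (x - c) * deriv G x = -G c := by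
    rw [setIntegral_congr_fun measurableSet_Ioi (g := deriv G) fun x hx => by
        simp [Real.sign_of_pos (sub_pos.2 (mem_Ioi.1 hx))],
      hGc.integral_Ioi_deriv_eq hG]
  rw [← intervalIntegral.integral_Iic_add_Ioi
      ((integrableOn_Iic_iff_integrableOn_Iio).2 (integrableOn_sign_sub_mul_Iio hG' c))
      (integrableOn_sign_sub_mul_Ioi hG' c), integral_Iic_eq_integral_Iio, hIio, hIoi]
  ring

theorem eq_intervalIntegral_add_of_sub_eq {F D : ℝ → ℝ} (a : ℝ)
    (hF : ∀ x y, F y - F x = ∫ ξ in x..y, D ξ) : F = fun y => (∫ ξ in a..y, D ξ) + F a := by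
  funext y
  rw [← hF a y, sub_add_cancel]

theorem continuous_of_sub_eq_intervalIntegral {F D : ℝ → ℝ} (hD : LocallyIntegrable D)
    (hF : ∀ x y, F y - F x = ∫ ξ in x..y, D ξ) : Continuous F := by
  rw [eq_intervalIntegral_add_of_sub_eq 0 hF]
  exact (intervalIntegral.continuous_primitive
    (fun a b => (hD.integrableOn_isCompact isCompact_uIcc).intervalIntegrable) 0).add
    continuous_const

theorem integral_mul_eq_neg_integral_mul_deriv {F D G : ℝ → ℝ} (hD : LocallyIntegrable D)
    (hF : ∀ x y, F y - F x = ∫ ξ in x..y, D ξ) (hG : ContDiff ℝ 1 G)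
    (hGc : HasCompactSupport G) :
    ∫ x, D x * G x = -∫ x, F x * deriv G x := by
  obtain ⟨R, hR⟩ := hGc.isCompact.isBounded.subset_closedBall 0
  rw [Real.closedBall_eq_Icc, zero_sub, zero_add] at hR
  set a := -R - 1
  set b := R + 1
  have hGa : G a = 0 := image_eq_zero_of_notMem_tsupport fun h => by linarith [(hR h).1]
  have hGb : G b = 0 := image_eq_zero_of_notMem_tsupport fun h => by linarith [(hR h).2]
  have hsupp : tsupport G ⊆ Ioc a b := fun x hx =>
    ⟨by linarith [(hR hx).1], by linarith [(hR hx).2]⟩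
  have hF_ac : AbsolutelyContinuousOnInterval F a b := by
    rw [eq_intervalIntegral_add_of_sub_eq a hF]
    exact ((hD.integrableOn_isCompact isCompact_uIcc).intervalIntegrable
      |>.absolutelyContinuousOnInterval_intervalIntegral left_mem_uIcc).add
      contDiffOn_const.absolutelyContinuousOnInterval
  have hF_deriv : ∀ᵐ x, deriv F x = D x := by
    filter_upwards [LocallyIntegrable.ae_hasDerivAt_integral hD] with x hx
    rw [eq_intervalIntegral_add_of_sub_eq 0 hF]
    exact ((hx 0).add_const _).deriv
  rw [← intervalIntegral.integral_eq_integral_of_support_subset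
      ((Function.support_mul_subset_right _ _).trans (subset_tsupport _ |>.trans hsupp)),
    ← intervalIntegral.integral_eq_integral_of_support_subset
      ((Function.support_mul_subset_right _ _).trans (support_deriv_subset.trans hsupp)),
    hF_ac.integral_mul_deriv_eq_deriv_mul hG.contDiffOn.absolutelyContinuousOnInterval,
    hGa, hGb, mul_zero, mul_zero, sub_zero, zero_sub, neg_neg]
  refine intervalIntegral.integral_congr_ae ?_
  filter_upwards [hF_deriv] with x hx _
  rw [hx]

theorem integral_mul_eq_neg_integral_mul_deriv_sub_sum_jumps {ι : Type*} [Fintype ι]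
    {s ζ : ι → ℝ} {w D G : ℝ → ℝ} (hD : LocallyIntegrable D)
    (hreg : ∀ x y, (w y - 2⁻¹ * ∑ j, ζ j * Real.sign (y - s j))
      - (w x - 2⁻¹ * ∑ j, ζ j * Real.sign (x - s j)) = ∫ ξ in x..y, D ξ)
    (hG : ContDiff ℝ 1 G) (hGc : HasCompactSupport G) :
    ∫ x, D x * G x = -(∫ x, w x * deriv G x) - ∑ j, ζ j * G (s j) := by
  set F : ℝ → ℝ := fun x => w x - 2⁻¹ * ∑ j, ζ j * Real.sign (x - s j)
  have hG' : Integrable (deriv G) :=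
    (hG.continuous_deriv le_rfl).integrable_of_hasCompactSupport hGc.deriv
  have hFG' : Integrable fun x => F x * deriv G x :=
    ((continuous_of_sub_eq_intervalIntegral hD hreg).mul
      (hG.continuous_deriv le_rfl)).integrable_of_hasCompactSupport hGc.deriv.mul_left
  have hjump : Integrable fun x => ∑ j, 2⁻¹ * ζ j * (Real.sign (x - s j) * deriv G x) :=
    integrable_finsetSum _ fun j _ => (integrable_sign_sub_mul hG' (s j)).const_mul _
  have hsplit : (fun x => w x * deriv G x)
      = fun x => F x * deriv G x + ∑ j, 2⁻¹ * ζ j * (Real.sign (x - s j) * deriv G x) := by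
    funext x
    have hsum : 2⁻¹ * (∑ j, ζ j * Real.sign (x - s j)) * deriv G x
        = ∑ j, 2⁻¹ * ζ j * (Real.sign (x - s j) * deriv G x) := by
      rw [Finset.mul_sum, Finset.sum_mul]
      exact Finset.sum_congr rfl fun j _ => by ring
    rw [sub_mul, hsum, sub_add_cancel]
  have hw : ∫ x, w x * deriv G x = (∫ x, F x * deriv G x) - ∑ j, ζ j * G (s j) := by
    rw [hsplit, integral_add hFG' hjump,
      integral_finsetSum _ fun j _ => (integrable_sign_sub_mul hG' (s j)).const_mul _]
    have hjump_j : ∀ j, ∫ x, 2⁻¹ * ζ j * (Real.sign (x - s j) * deriv G x) = -(ζ j * G (s j)) :=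
      fun j => by rw [integral_const_mul, integral_sign_sub_mul_deriv hG hGc]; ring
    simp only [hjump_j, Finset.sum_neg_distrib, ← sub_eq_add_neg]
  have hparts : ∫ x, D x * G x = -∫ x, F x * deriv G x :=
    integral_mul_eq_neg_integral_mul_deriv hD hreg hG hGc
  rw [hparts, hw]
  ring

theorem integral_Ioi_oscillator_balance {ι : Type*} [Fintype ι] {M K : ι → ℝ} {κ : ℝ}
    {z zp zpp ζ φ : ι → ℝ → ℝ} {Q : ℝ → ℝ}
    (hzp : ∀ j t, HasDerivAt (z j) (zp j t) t) (hzpp : ∀ j t, HasDerivAt (zp j) (zpp j t) t)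
    (hosc : ∀ j t, M j * zpp j t + K j * z j t = κ * ζ j t) (hz0 : ∀ j, zp j 0 = 0)
    (hφ : ∀ j, ContDiff ℝ 1 (φ j)) (hφ_supp : ∀ j, HasCompactSupport (φ j))
    (hQ : IntegrableOn Q (Ioi 0))
    (hζQ : ∀ᵐ t ∂(volume.restrict (Ioi 0)), κ * ∑ j, ζ j t * φ j t = Q t) :
    (∫ t in Ioi 0, Q t) - (∫ t in Ioi 0, ∑ j, K j * z j t * φ j t)
      + ∫ t in Ioi 0, ∑ j, M j * zp j t * deriv (φ j) t = 0 := by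
  have hz_cont : ∀ j, Continuous (z j) := fun j => continuous_iff_continuousAt.2 fun t =>
    (hzp j t).continuousAt
  have hzp_cont : ∀ j, Continuous (zp j) := fun j => continuous_iff_continuousAt.2 fun t =>
    (hzpp j t).continuousAt
  have hKzφ : IntegrableOn (fun t => ∑ j, K j * z j t * φ j t) (Ioi 0) :=
    (integrable_finsetSum _ fun j _ => (((hz_cont j).const_mul (K j)).mul (hφ j).continuous
      |>.integrable_of_hasCompactSupport (hφ_supp j).mul_left)).integrableOn
  have hMzpφ' : IntegrableOn (fun t => ∑ j, M j * zp j t * deriv (φ j) t) (Ioi 0) :=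
    (integrable_finsetSum _ fun j _ => (((hzp_cont j).const_mul (M j)).mul
      ((hφ j).continuous_deriv le_rfl) |>.integrable_of_hasCompactSupport
        (hφ_supp j).deriv.mul_left)).integrableOn
  have hderiv : ∀ t, HasDerivAt (fun t => ∑ j, M j * zp j t * φ j t)
      (∑ j, (M j * zpp j t * φ j t + M j * zp j t * deriv (φ j) t)) t := fun t =>
    HasDerivAt.fun_sum fun j _ =>
      ((hzpp j t).const_mul (M j)).mul ((hφ j).differentiable one_ne_zero t).hasDerivAt
  have hbalance : ∀ᵐ t ∂(volume.restrict (Ioi 0)),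
      ∑ j, (M j * zpp j t * φ j t + M j * zp j t * deriv (φ j) t)
        = Q t - ∑ j, K j * z j t * φ j t + ∑ j, M j * zp j t * deriv (φ j) t := by
    filter_upwards [hζQ] with t ht
    rw [← ht, Finset.mul_sum, Finset.sum_add_distrib, ← Finset.sum_sub_distrib]
    congr 1
    exact Finset.sum_congr rfl fun j _ => by linear_combination φ j t * hosc j t
  have hF0 : ∑ j, M j * zp j 0 * φ j 0 = 0 := by simp [hz0]
  have hF_top : ∀ᶠ t in atTop, ∑ j, M j * zp j t * φ j t = 0 := by
    filter_upwards [eventually_all.2 fun j => (hφ_supp j).eventually_eq_zero_atTop] with t ht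
    simp [ht]
  have := integral_Ioi_of_hasDerivAt_of_eventually_eq_zero hderiv hF_top
    (((hQ.fun_sub hKzφ).add hMzpφ').congr_fun_ae (hbalance.mono fun _ h => h.symm))
  rw [integral_congr_ae hbalance, integral_add (hQ.fun_sub hKzφ) hMzpφ', integral_sub hQ hKzφ,
    hF0, neg_zero] at this
  exact this

theorem weak_formulation_general
    (n : ℕ) (s : Fin n → ℝ)
    (ρ₀ a S₀ : ℝ) (hρ₀ : 0 < ρ₀) (hS₀ : 0 < S₀)
    (M K : Fin n → ℝ)
    (v vt vtt vx D2 : ℝ → ℝ → ℝ) (vxp vxm : Fin n → ℝ → ℝ)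
    (z zp zpp : Fin n → ℝ → ℝ)
    -- time derivatives of the velocity field
    (hvtt : ∀ t x, HasDerivAt (fun τ => vt τ x) (vtt t x) t)
    -- (∂v/∂x)_reg is absolutely continuous in `x` with derivative `D2`
    (hreg : ∀ t x y : ℝ,
      (vx t y - 2⁻¹ * ∑ j, (vxp j t - vxm j t) * Real.sign (y - s j))
        - (vx t x - 2⁻¹ * ∑ j, (vxp j t - vxm j t) * Real.sign (x - s j))
        = ∫ ξ in x..y, D2 t ξ)
    -- the field equation ∂²v/∂t² = a² ∂/∂x (∂v/∂x)_reg
    (heq : ∀ t, ∀ᵐ x : ℝ, vtt t x = a ^ 2 * D2 t x)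
    -- oscillator equations Mⱼ zⱼ″ + Kⱼ zⱼ = a²ρ₀S₀ ζⱼ and boundary conditions
    (hzp : ∀ j t, HasDerivAt (z j) (zp j t) t)
    (hzpp : ∀ j t, HasDerivAt (zp j) (zpp j t) t)
    (hosc : ∀ j t, M j * zpp j t + K j * z j t = a ^ 2 * ρ₀ * S₀ * (vxp j t - vxm j t))
    (hz0 : ∀ j, zp j 0 = 0)
    -- regularity and integrability (v ∈ C²(ℝ;L²) ∩ C¹(ℝ;H¹), H² between the walls)
    (hvtcont : Continuous fun q : ℝ × ℝ => vt q.1 q.2)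
    (hvttm : AEStronglyMeasurable (fun q : ℝ × ℝ => vtt q.1 q.2) volume)
    (hvxm' : AEStronglyMeasurable (fun q : ℝ × ℝ => vx q.1 q.2) volume)
    (hD2m : AEStronglyMeasurable (fun q : ℝ × ℝ => D2 q.1 q.2) volume)
    (hL2 : ∀ t, Integrable (fun x => (v t x) ^ 2) ∧ Integrable (fun x => (vt t x) ^ 2) ∧
      Integrable (fun x => (vtt t x) ^ 2) ∧ Integrable (fun x => (vx t x) ^ 2) ∧
      Integrable (fun x => (D2 t x) ^ 2))
    (hbdd : ∃ c : ℝ, ∀ t, (∫ x : ℝ, (v t x) ^ 2) ≤ c ∧ (∫ x : ℝ, (vt t x) ^ 2) ≤ c ∧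
      (∫ x : ℝ, (vtt t x) ^ 2) ≤ c ∧ (∫ x : ℝ, (vx t x) ^ 2) ≤ c ∧
      (∫ x : ℝ, (D2 t x) ^ 2) ≤ c)
    -- the test function
    (g : ℝ → ℝ → ℝ)
    (hg : ContDiff ℝ 1 fun q : ℝ × ℝ => g q.1 q.2)
    (hgsupp : HasCompactSupport fun q : ℝ × ℝ => g q.1 q.2) :
    -(∫ t in Set.Ioi (0 : ℝ), ∫ x : ℝ, vt t x * deriv (fun τ => g τ x) t)
        - (∫ x : ℝ, vt 0 x * g 0 x)
      = -(a ^ 2) * (∫ t in Set.Ioi (0 : ℝ), ∫ x : ℝ, vx t x * deriv (fun ξ => g t ξ) x)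
        + (ρ₀ * S₀)⁻¹ *
            (∫ t in Set.Ioi (0 : ℝ), ∑ j, M j * zp j t * deriv (fun τ => g τ (s j)) t)
        - (ρ₀ * S₀)⁻¹ * (∫ t in Set.Ioi (0 : ℝ), ∑ j, K j * z j t * g t (s j)) := by
  obtain ⟨c, hc⟩ := hbdd
  set μ : Measure ℝ := volume.restrict (Ioi 0)
  have hμ : μ.prod volume ≤ (volume : Measure (ℝ × ℝ)) :=
    Measure.volume_eq_prod ℝ ℝ ▸ Measure.prod_mono Measure.restrict_le_self le_rfl
  have hvttg : Integrable (fun q : ℝ × ℝ => vtt q.1 q.2 * g q.1 q.2) (μ.prod volume) :=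
    integrable_mul_of_sq_integral_le_of_hasCompactSupport (hvttm.mono_measure hμ)
      (fun t => (hL2 t).2.2.1) (fun t => (hc t).2.2.1) hg.continuous hgsupp
  have hvtgt := integrable_mul_deriv_left_slice (hvtcont.aestronglyMeasurable.mono_measure hμ)
    (fun t => (hL2 t).2.1) (fun t => (hc t).2.1) hg hgsupp
  have hvxgx := integrable_mul_deriv_right_slice (hvxm'.mono_measure hμ)
    (fun t => (hL2 t).2.2.2.1) (fun t => (hc t).2.2.2.1) hg hgsupp
  have htime := integral_Ioi_integral_deriv_mul_add_mul_deriv hvtt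
    (fun x => (hg.left_slice x).differentiable one_ne_zero)
    (fun x => (hgsupp.left_slice x).eventually_eq_zero_atTop) hvttg hvtgt
  have hspace : ∀ᵐ t ∂μ, a ^ 2 * ρ₀ * S₀ * ∑ j, (vxp j t - vxm j t) * g t (s j)
      = ρ₀ * S₀ * (-(∫ x, vtt t x * g t x) - a ^ 2 * ∫ x, vx t x * deriv (g t ·) x) := by
    refine ae_restrict_of_ae ?_
    filter_upwards [(Measure.volume_eq_prod ℝ ℝ ▸ hD2m).prodMk_left] with t hD2t
    have hD2_loc : LocallyIntegrable (D2 t) :=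
      ((memLp_two_iff_integrable_sq hD2t).2 (hL2 t).2.2.2.2).locallyIntegrable one_le_two
    have hvtt_eq : ∫ x, vtt t x * g t x = a ^ 2 * ∫ x, D2 t x * g t x := by
      rw [← integral_const_mul]
      exact integral_congr_ae ((heq t).mono fun x hx => by dsimp only; rw [hx, mul_assoc])
    linear_combination ρ₀ * S₀ * hvtt_eq + a ^ 2 * ρ₀ * S₀ *
      integral_mul_eq_neg_integral_mul_deriv_sub_sum_jumps hD2_loc (hreg t)
        (hg.right_slice t) (hgsupp.right_slice t)
  have hW : Integrable (fun t => ∫ x, vtt t x * g t x) μ := hvttg.integral_prod_left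
  have hV : Integrable (fun t => a ^ 2 * ∫ x, vx t x * deriv (g t ·) x) μ :=
    hvxgx.integral_prod_left.const_mul (a ^ 2)
  have hosc_int := integral_Ioi_oscillator_balance hzp hzpp hosc hz0
    (Q := fun t => ρ₀ * S₀ * (-(∫ x, vtt t x * g t x) - a ^ 2 * ∫ x, vx t x * deriv (g t ·) x))
    (fun j => hg.left_slice (s j)) (fun j => hgsupp.left_slice (s j))
    ((hW.fun_neg.sub' hV).const_mul (ρ₀ * S₀)) hspace
  rw [integral_const_mul, integral_sub hW.fun_neg hV, integral_neg, integral_const_mul]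
    at hosc_int
  have hρS : ρ₀ * S₀ ≠ 0 := by positivity
  linear_combination (norm := (field_simp; ring)) -htime - (ρ₀ * S₀)⁻¹ * hosc_int

/-- Weak formulation of the `n`-oscillator system.  Here
`v : ℝ → ℝ → ℝ` (time first) with time derivatives `vt`, `vtt`, spatial derivative `vx`
off the walls with one-sided limits `vxp j t = ∂v/∂x(t,sⱼ⁺)`, `vxm j t = ∂v/∂x(t,sⱼ⁻)`,
jumps `ζⱼ(t) = vxp j t − vxm j t`, regular part
`(∂v/∂x)_reg(t,x) = ∂v/∂x(t,x) − ½ Σⱼ ζⱼ(t) sgn(x − sⱼ)` with spatial derivative `D2`;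
`z j` are the oscillator velocities, with `zp j = zⱼ′`, `zpp j = zⱼ″`.  Under the
evolution equations and the stated regularity, testing against any `C¹` compactly
supported `g` yields the weak identity of the paper. -/
theorem weak_formulation
    (n : ℕ) (s : Fin n → ℝ) (hs : StrictMono s)
    (ρ₀ a S₀ : ℝ) (hρ₀ : 0 < ρ₀) (ha : 0 < a) (hS₀ : 0 < S₀)
    (M K : Fin n → ℝ) (hM : ∀ j, 0 < M j) (hK : ∀ j, 0 < K j)
    (v vt vtt vx D2 : ℝ → ℝ → ℝ) (vxp vxm : Fin n → ℝ → ℝ)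
    (z zp zpp : Fin n → ℝ → ℝ)
    -- time derivatives of the velocity field
    (hvt : ∀ t x, HasDerivAt (fun τ => v τ x) (vt t x) t)
    (hvtt : ∀ t x, HasDerivAt (fun τ => vt τ x) (vtt t x) t)
    -- spatial derivative off the walls
    (hvx : ∀ t x, (∀ j, x ≠ s j) → HasDerivAt (fun ξ => v t ξ) (vx t x) x)
    -- one-sided limits of ∂v/∂x at the walls
    (hvxp : ∀ j t, Tendsto (fun ξ => vx t ξ) (𝓝[>] (s j)) (𝓝 (vxp j t)))
    (hvxm : ∀ j t, Tendsto (fun ξ => vx t ξ) (𝓝[<] (s j)) (𝓝 (vxm j t)))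
    -- (∂v/∂x)_reg is absolutely continuous in `x` with derivative `D2`
    (hreg : ∀ t x y : ℝ,
      (vx t y - 2⁻¹ * ∑ j, (vxp j t - vxm j t) * Real.sign (y - s j))
        - (vx t x - 2⁻¹ * ∑ j, (vxp j t - vxm j t) * Real.sign (x - s j))
        = ∫ ξ in x..y, D2 t ξ)
    -- the field equation ∂²v/∂t² = a² ∂/∂x (∂v/∂x)_reg
    (heq : ∀ t, ∀ᵐ x : ℝ, vtt t x = a ^ 2 * D2 t x)
    -- oscillator equations Mⱼ zⱼ″ + Kⱼ zⱼ = a²ρ₀S₀ ζⱼ and boundary conditions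
    (hzp : ∀ j t, HasDerivAt (z j) (zp j t) t)
    (hzpp : ∀ j t, HasDerivAt (zp j) (zpp j t) t)
    (hosc : ∀ j t, M j * zpp j t + K j * z j t = a ^ 2 * ρ₀ * S₀ * (vxp j t - vxm j t))
    (hbc : ∀ j t, v t (s j) = z j t)
    (hbc' : ∀ j t, vt t (s j) = zp j t)
    (hz0 : ∀ j, zp j 0 = 0)
    -- regularity and integrability (v ∈ C²(ℝ;L²) ∩ C¹(ℝ;H¹), H² between the walls)
    (hvcont : Continuous fun q : ℝ × ℝ => v q.1 q.2)
    (hvtcont : Continuous fun q : ℝ × ℝ => vt q.1 q.2)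
    (hvttm : AEStronglyMeasurable (fun q : ℝ × ℝ => vtt q.1 q.2) volume)
    (hvxm' : AEStronglyMeasurable (fun q : ℝ × ℝ => vx q.1 q.2) volume)
    (hD2m : AEStronglyMeasurable (fun q : ℝ × ℝ => D2 q.1 q.2) volume)
    (hL2 : ∀ t, Integrable (fun x => (v t x) ^ 2) ∧ Integrable (fun x => (vt t x) ^ 2) ∧
      Integrable (fun x => (vtt t x) ^ 2) ∧ Integrable (fun x => (vx t x) ^ 2) ∧
      Integrable (fun x => (D2 t x) ^ 2))
    (hbdd : ∃ c : ℝ, ∀ t, (∫ x : ℝ, (v t x) ^ 2) ≤ c ∧ (∫ x : ℝ, (vt t x) ^ 2) ≤ c ∧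
      (∫ x : ℝ, (vtt t x) ^ 2) ≤ c ∧ (∫ x : ℝ, (vx t x) ^ 2) ≤ c ∧
      (∫ x : ℝ, (D2 t x) ^ 2) ≤ c)
    -- the test function
    (g : ℝ → ℝ → ℝ)
    (hg : ContDiff ℝ 1 fun q : ℝ × ℝ => g q.1 q.2)
    (hgsupp : HasCompactSupport fun q : ℝ × ℝ => g q.1 q.2) :
    -(∫ t in Set.Ioi (0 : ℝ), ∫ x : ℝ, vt t x * deriv (fun τ => g τ x) t)
        - (∫ x : ℝ, vt 0 x * g 0 x)
      = -(a ^ 2) * (∫ t in Set.Ioi (0 : ℝ), ∫ x : ℝ, vx t x * deriv (fun ξ => g t ξ) x)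
        + (ρ₀ * S₀)⁻¹ *
            (∫ t in Set.Ioi (0 : ℝ), ∑ j, M j * zp j t * deriv (fun τ => g τ (s j)) t)
        - (ρ₀ * S₀)⁻¹ * (∫ t in Set.Ioi (0 : ℝ), ∑ j, K j * z j t * g t (s j)) :=
  weak_formulation_general n s ρ₀ a S₀ hρ₀ hS₀ M K v vt vtt vx D2 vxp vxm z zp zpp hvtt hreg heq hzp
    hzpp hosc hz0 hvtcont hvttm hvxm' hD2m hL2 hbdd g hg hgsupp
end
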